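/- Let c > 0 and y ∈ (max(0, 1−c), 1), and let α > 0 be the unique solution of (1 − e^{−α})/α = (1−y)/c. Define δ* ∈ 𝒫(ℕ) by δ*(0) = y and δ*(k) = (1−y)·α^k/(k!·(e^α − 1)) for k ≥ 1. Then δ* is a probability measure on ℕ with δ*(0) = y and mean Σ_{k≥0} k·δ*(k) = c, and δ* minimizes the relative entropy with respect to the Poisson distribution q_c among all measures satisfying these constraints: for every probability measure δ on ℕ with δ(0) = y and Σ_{k≥0} k·δ(k) = c, one has H(δ ∥ q_c) ≥ H(δ* ∥ q_c). -/

import Mathlib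

/-!
Away from `k = 0` the ratio `δ*(k) / q_c(k)` is a constant times `(α/c)^k`, so
`log (δ*(k) / q_c(k)) = a + b k + d [k = 0]`, and the cross term
`∑ δ(k) log (δ*(k) / q_c(k))` equals `a + b c + d y` for every `δ` satisfying the two
constraints. The chain rule `H(δ ∥ q_c) = H(δ ∥ δ*) + ∑ δ(k) log (δ*(k) / q_c(k))` together
with `H(δ ∥ δ*) ≥ 0` then gives `H(δ ∥ q_c) ≥ a + b c + d y = H(δ* ∥ q_c)`. The constraints
on `δ*` itself come from `∑ α^k/k! = e^α` and `∑ k α^k/k! = α e^α`; the equation defining `α`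
is exactly the mean condition.
-/

open scoped ENNReal

/-- Relative entropy `H(p ∥ q) = ∑ₖ p(k) log (p(k)/q(k))` of two probability mass functions
on `ℕ`, with the conventions `0 log 0 = 0` and `H(p ∥ q) = ∞` if `p` is not absolutely
continuous w.r.t. `q`.  (For mass functions of probability measures this agrees with the
usual definition: each corrected summand `p log(p/q) − p + q` is nonnegative and the
correction terms `∑ q − ∑ p` cancel.) -/
noncomputable def relEntN (p q : ℕ → ℝ≥0∞) : ℝ≥0∞ := by
  classical
  exact if ∀ k, q k = 0 → p k = 0 then
    (∑' k, ENNReal.ofReal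
      ((p k).toReal * Real.log ((p k).toReal / (q k).toReal) - (p k).toReal + (q k).toReal))
  else ⊤

/-- The Poisson mass function with parameter `c`: `q_c(k) = e^{−c} c^k / k!`. -/
noncomputable def poisMass (c : ℝ) : ℕ → ℝ≥0∞ :=
  fun k => ENNReal.ofReal (Real.exp (-c) * c ^ k / (Nat.factorial k))

/-- The minimizer `δ*`: `δ*(0) = y` and `δ*(k) = (1−y)·α^k/(k!(e^α − 1))` for `k ≥ 1`. -/
noncomputable def deltaStar (y α : ℝ) : ℕ → ℝ≥0∞ :=
  fun k => if k = 0 then ENNReal.ofReal y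
    else ENNReal.ofReal ((1 - y) * α ^ k / (Nat.factorial k * (Real.exp α - 1)))


open Real
open scoped Nat

noncomputable def relEntTerm (x y : ℝ) : ℝ := x * log (x / y) - x + y

lemma relEntTerm_eq_mul_klFun (x : ℝ) {y : ℝ} (hy : 0 < y) :
    relEntTerm x y = y * InformationTheory.klFun (x / y) := by
  rw [relEntTerm, InformationTheory.klFun]
  field_simp
  ring

lemma relEntTerm_nonneg {x y : ℝ} (hx : 0 ≤ x) (hy : 0 < y) : 0 ≤ relEntTerm x y := by
  rw [relEntTerm_eq_mul_klFun x hy]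
  exact mul_nonneg hy.le (InformationTheory.klFun_nonneg (div_nonneg hx hy.le))

lemma relEntTerm_eq_add {x r q : ℝ} (hx : 0 ≤ x) (hr : 0 < r) (hq : 0 < q) :
    relEntTerm x q = relEntTerm x r + (x * log (r / q) - r + q) := by
  rcases hx.eq_or_lt with rfl | hx
  · simp [relEntTerm]
  · rw [relEntTerm, relEntTerm, ← div_mul_div_cancel₀ (a := x) (c := q) hr.ne',
      log_mul (div_pos hx hr).ne' (div_pos hr hq).ne']
    ring

lemma relEntN_eq_tsum {p q : ℕ → ℝ≥0∞} (hq : ∀ k, q k ≠ 0) :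
    relEntN p q = ∑' k, ENNReal.ofReal (relEntTerm (p k).toReal (q k).toReal) :=
  if_pos fun k hk => absurd hk (hq k)

lemma HasSum.tsum_ofReal_eq {ι : Type*} {f : ι → ℝ} {a : ℝ} (h : HasSum f a)
    (hf : ∀ i, 0 ≤ f i) : ∑' i, ENNReal.ofReal (f i) = ENNReal.ofReal a := by
  rw [← ENNReal.ofReal_tsum_of_nonneg hf h.summable, h.tsum_eq]

lemma HasSum.ofReal_le_tsum_ofReal {ι : Type*} {f : ι → ℝ} {a : ℝ} (h : HasSum f a) :
    ENNReal.ofReal a ≤ ∑' i, ENNReal.ofReal (f i) := by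
  have hpos : HasSum (fun i => max (f i) 0) (∑' i, max (f i) 0) :=
    (h.summable.abs.of_nonneg_of_le (fun i => le_max_right _ _)
      (fun i => max_le (le_abs_self _) (abs_nonneg _))).hasSum
  calc ENNReal.ofReal a ≤ ENNReal.ofReal (∑' i, max (f i) 0) :=
        ENNReal.ofReal_le_ofReal (hasSum_le (fun i => le_max_left _ _) h hpos)
    _ = ∑' i, ENNReal.ofReal (f i) := by
        rw [← hpos.tsum_ofReal_eq (fun i => le_max_right _ _)]
        simp [ENNReal.ofReal_max]

lemma hasSum_toReal_of_tsum_eq_ofReal {ι : Type*} {f : ι → ℝ≥0∞} {a : ℝ} (ha : 0 ≤ a)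
    (h : ∑' i, f i = ENNReal.ofReal a) : HasSum (fun i => (f i).toReal) a := by
  have hne : ∑' i, f i ≠ ⊤ := h ▸ ENNReal.ofReal_ne_top
  have := ENNReal.hasSum_toReal hne
  rwa [← ENNReal.tsum_toReal_eq (ENNReal.ne_top_of_tsum_ne_top hne), h,
    ENNReal.toReal_ofReal ha] at this

section Gibbs

variable {ι : Type*} {p r q : ι → ℝ} {T : ℝ}

lemma ofReal_le_tsum_relEntTerm (hp : ∀ i, 0 ≤ p i) (hr : ∀ i, 0 < r i) (hq : ∀ i, 0 < q i)
    (hr1 : HasSum r 1) (hq1 : HasSum q 1) (hT : HasSum (fun i => p i * log (r i / q i)) T) :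
    ENNReal.ofReal T ≤ ∑' i, ENNReal.ofReal (relEntTerm (p i) (q i)) := by
  have hcross : HasSum (fun i => p i * log (r i / q i) - r i + q i) T := by
    simpa using (hT.sub hr1).add hq1
  refine hcross.ofReal_le_tsum_ofReal.trans (ENNReal.tsum_le_tsum fun i => ?_)
  rw [relEntTerm_eq_add (hp i) (hr i) (hq i)]
  exact ENNReal.ofReal_le_ofReal (le_add_of_nonneg_left (relEntTerm_nonneg (hp i) (hr i)))

lemma tsum_relEntTerm_eq_ofReal (hr : ∀ i, 0 ≤ r i) (hq : ∀ i, 0 < q i)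
    (hr1 : HasSum r 1) (hq1 : HasSum q 1) (hT : HasSum (fun i => r i * log (r i / q i)) T) :
    ∑' i, ENNReal.ofReal (relEntTerm (r i) (q i)) = ENNReal.ofReal T := by
  have h : HasSum (fun i => relEntTerm (r i) (q i)) T := by
    simpa [relEntTerm] using (hT.sub hr1).add hq1
  exact h.tsum_ofReal_eq fun i => relEntTerm_nonneg (hr i) (hq i)

end Gibbs

lemma hasSum_pow_div_factorial (x : ℝ) : HasSum (fun n : ℕ => x ^ n / n !) (exp x) := by
  rw [exp_eq_exp_ℝ]
  exact NormedSpace.expSeries_div_hasSum_exp x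

lemma hasSum_pow_succ_div_factorial (x : ℝ) :
    HasSum (fun n : ℕ => x ^ (n + 1) / (n + 1)!) (exp x - 1) := by
  simpa using (hasSum_nat_add_iff' 1).mpr (hasSum_pow_div_factorial x)

lemma hasSum_natCast_mul_pow_div_factorial (x : ℝ) :
    HasSum (fun n : ℕ => n * (x ^ n / n !)) (x * exp x) := by
  refine (hasSum_nat_add_iff' 1).mp ?_
  have h : ∀ n : ℕ, ((n : ℝ) + 1) * (x ^ (n + 1) / (n + 1)!) = x * (x ^ n / n !) := by
    intro n
    rw [Nat.factorial_succ, pow_succ]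
    push_cast
    field_simp
  simpa [h] using (hasSum_pow_div_factorial x).mul_left x

noncomputable def poissonReal (c : ℝ) (k : ℕ) : ℝ := exp (-c) * c ^ k / k !

lemma poissonReal_pos {c : ℝ} (hc : 0 < c) (k : ℕ) : 0 < poissonReal c k := by
  unfold poissonReal
  positivity

lemma hasSum_poissonReal (c : ℝ) : HasSum (poissonReal c) 1 := by
  have h := (hasSum_pow_div_factorial c).mul_left (exp (-c))
  rw [← exp_add, neg_add_cancel, exp_zero] at h
  exact h.congr_fun fun k => mul_div_assoc _ _ _

lemma relEntN_poisMass_eq {c : ℝ} (hc : 0 < c) (δ : ℕ → ℝ≥0∞) :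
    relEntN δ (poisMass c) =
      ∑' k, ENNReal.ofReal (relEntTerm (δ k).toReal (poissonReal c k)) := by
  have hq k : poisMass c k = ENNReal.ofReal (poissonReal c k) := rfl
  rw [relEntN_eq_tsum fun k => by simp [hq, poissonReal_pos hc k]]
  simp_rw [hq, ENNReal.toReal_ofReal (poissonReal_pos hc _).le]

lemma hasSum_mul_affine_add_ite_zero {p : ℕ → ℝ} {m : ℝ} (hp : HasSum p 1)
    (hpm : HasSum (fun k : ℕ => k * p k) m) (a b d : ℝ) :
    HasSum (fun k : ℕ => p k * (a + k * b + if k = 0 then d else 0)) (a + m * b + p 0 * d) := by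
  have h := ((hp.mul_left a).add (hpm.mul_right b)).add (hasSum_ite_eq 0 (p 0 * d))
  rw [mul_one] at h
  refine h.congr_fun fun k => ?_
  split_ifs with hk
  · subst hk; ring
  · ring

lemma exp_sub_one_pos {x : ℝ} (hx : 0 < x) : 0 < exp x - 1 :=
  sub_pos.mpr (one_lt_exp_iff.mpr hx)

noncomputable def deltaStarReal (y α : ℝ) (k : ℕ) : ℝ :=
  if k = 0 then y else (1 - y) * α ^ k / (k ! * (exp α - 1))

section DeltaStar

variable {c y α : ℝ}

lemma deltaStar_eq_ofReal (y α : ℝ) (k : ℕ) :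
    deltaStar y α k = ENNReal.ofReal (deltaStarReal y α k) := by
  unfold deltaStar deltaStarReal
  split_ifs <;> rfl

lemma deltaStarReal_zero (y α : ℝ) : deltaStarReal y α 0 = y := if_pos rfl

lemma deltaStarReal_of_ne_zero (y α : ℝ) {k : ℕ} (hk : k ≠ 0) :
    deltaStarReal y α k = (1 - y) / (exp α - 1) * (α ^ k / k !) := by
  rw [deltaStarReal, if_neg hk, div_mul_div_comm, mul_comm (exp α - 1)]

lemma deltaStarReal_pos (hy : 0 < y) (hy1 : y < 1) (hα : 0 < α) (k : ℕ) :
    0 < deltaStarReal y α k := by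
  rcases eq_or_ne k 0 with rfl | hk
  · rwa [deltaStarReal_zero]
  · rw [deltaStarReal_of_ne_zero y α hk]
    have := exp_sub_one_pos hα
    have : 0 < 1 - y := sub_pos.mpr hy1
    positivity

lemma hasSum_deltaStarReal (y : ℝ) (hα : 0 < α) : HasSum (deltaStarReal y α) 1 := by
  have hE : exp α - 1 ≠ 0 := (exp_sub_one_pos hα).ne'
  refine (hasSum_nat_add_iff' 1).mp ?_
  have h := (hasSum_pow_succ_div_factorial α).mul_left ((1 - y) / (exp α - 1))
  rw [div_mul_cancel₀ _ hE] at h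
  simpa only [Finset.sum_range_one, deltaStarReal_zero,
    deltaStarReal_of_ne_zero y α (Nat.succ_ne_zero _)] using h

lemma hasSum_natCast_mul_deltaStarReal (hc : 0 < c) (hα : 0 < α)
    (hsol : (1 - exp (-α)) / α = (1 - y) / c) :
    HasSum (fun k : ℕ => k * deltaStarReal y α k) c := by
  have hE : exp α - 1 ≠ 0 := (exp_sub_one_pos hα).ne'
  have hmean : (1 - y) / (exp α - 1) * (α * exp α) = c := by
    rw [div_eq_div_iff hα.ne' hc.ne', exp_neg] at hsol
    field_simp at hsol ⊢
    linear_combination -hsol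
  have h := (hasSum_natCast_mul_pow_div_factorial α).mul_left ((1 - y) / (exp α - 1))
  rw [hmean] at h
  refine h.congr_fun fun k => ?_
  rcases eq_or_ne k 0 with rfl | hk
  · simp
  · rw [deltaStarReal_of_ne_zero y α hk]
    ring

lemma log_deltaStarReal_div_poissonReal (hc : 0 < c) (hy : 0 < y) (hy1 : y < 1) (hα : 0 < α)
    (k : ℕ) :
    log (deltaStarReal y α k / poissonReal c k) =
      log ((1 - y) / (exp α - 1)) + c + k * log (α / c) +
        if k = 0 then log y - log ((1 - y) / (exp α - 1)) else 0 := by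
  have hK : 0 < (1 - y) / (exp α - 1) :=
    div_pos (sub_pos.mpr hy1) (exp_sub_one_pos hα)
  rcases eq_or_ne k 0 with rfl | hk
  · simp [deltaStarReal_zero, poissonReal, log_div hy.ne' (exp_pos _).ne']
    ring
  · have hratio : deltaStarReal y α k / poissonReal c k =
        (1 - y) / (exp α - 1) * (α / c) ^ k * exp c := by
      rw [deltaStarReal_of_ne_zero y α hk, poissonReal, exp_neg, div_pow]
      field_simp
    rw [hratio, log_mul (by positivity) (exp_pos c).ne', log_mul hK.ne' (by positivity),
      log_pow, log_exp, if_neg hk]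
    ring

lemma hasSum_mul_log_deltaStarReal_div_poissonReal (hc : 0 < c) (hy : 0 < y) (hy1 : y < 1)
    (hα : 0 < α) {p : ℕ → ℝ} (hp : HasSum p 1) (hpm : HasSum (fun k : ℕ => k * p k) c)
    (hp0 : p 0 = y) :
    HasSum (fun k => p k * log (deltaStarReal y α k / poissonReal c k))
      (log ((1 - y) / (exp α - 1)) + c + c * log (α / c) +
        y * (log y - log ((1 - y) / (exp α - 1)))) := by
  simp_rw [log_deltaStarReal_div_poissonReal hc hy hy1 hα]
  rw [← hp0]
  exact hasSum_mul_affine_add_ite_zero hp hpm _ _ _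

end DeltaStar

/-- for `c > 0`, `y ∈ (max(0,1−c), 1)` and `α > 0` the unique solution of
`(1 − e^{−α})/α = (1−y)/c`, the measure `δ*` is a probability measure on `ℕ` with
`δ*(0) = y` and mean `c`, and it minimizes `H(· ∥ q_c)` among all probability measures
on `ℕ` with these two constraints. -/
theorem deltaStar_isMinimizer (c y α : ℝ) (hc : 0 < c) (hy0 : max 0 (1 - c) < y)
    (hy1 : y < 1) (hα : 0 < α) (hsol : (1 - Real.exp (-α)) / α = (1 - y) / c) :
    (∑' k, deltaStar y α k) = 1 ∧
    deltaStar y α 0 = ENNReal.ofReal y ∧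
    (∑' k : ℕ, (k : ℝ≥0∞) * deltaStar y α k) = ENNReal.ofReal c ∧
    (∀ δ : ℕ → ℝ≥0∞, (∑' k, δ k) = 1 → δ 0 = ENNReal.ofReal y →
      (∑' k : ℕ, (k : ℝ≥0∞) * δ k) = ENNReal.ofReal c →
      relEntN (deltaStar y α) (poisMass c) ≤ relEntN δ (poisMass c)) := by
  have hy : 0 < y := (le_max_left 0 (1 - c)).trans_lt hy0
  have hr := hasSum_deltaStarReal y hα
  have hrm := hasSum_natCast_mul_deltaStarReal hc hα hsol
  have hr0 (k : ℕ) := (deltaStarReal_pos hy hy1 hα k).le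
  refine ⟨?_, if_pos rfl, ?_, fun δ hδ1 hδ0 hδm => ?_⟩
  · simp_rw [deltaStar_eq_ofReal, hr.tsum_ofReal_eq hr0, ENNReal.ofReal_one]
  · simp_rw [deltaStar_eq_ofReal, ← ENNReal.ofReal_natCast,
      ← ENNReal.ofReal_mul (Nat.cast_nonneg _)]
    exact hrm.tsum_ofReal_eq fun k => mul_nonneg k.cast_nonneg (hr0 k)
  have hp := hasSum_toReal_of_tsum_eq_ofReal zero_le_one (hδ1.trans ENNReal.ofReal_one.symm)
  have hpm : HasSum (fun k : ℕ => k * (δ k).toReal) c := by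
    simpa using hasSum_toReal_of_tsum_eq_ofReal hc.le hδm
  have hp0 : (δ 0).toReal = y := by rw [hδ0, ENNReal.toReal_ofReal hy.le]
  simp_rw [relEntN_poisMass_eq hc, deltaStar_eq_ofReal, ENNReal.toReal_ofReal (hr0 _)]
  rw [tsum_relEntTerm_eq_ofReal hr0 (poissonReal_pos hc) hr (hasSum_poissonReal c)
    (hasSum_mul_log_deltaStarReal_div_poissonReal hc hy hy1 hα hr hrm (deltaStarReal_zero y α))]
  exact ofReal_le_tsum_relEntTerm (fun k => ENNReal.toReal_nonneg)
    (deltaStarReal_pos hy hy1 hα) (poissonReal_pos hc) hr (hasSum_poissonReal c)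
    (hasSum_mul_log_deltaStarReal_div_poissonReal hc hy hy1 hα hp hpm hp0)
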